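/- arXiv:1503.02458 — 6 statements merged into one kernel-verified Lean document; each statement's English description precedes it below -/
import Mathlib

section
/- Suppose the fractal interpolant S satisfies the functional equation S(L_i(x)) = α_i S(x) + R_i(α_i, x) for x ∈ [x₁,x_N], where the classical interpolant s satisfies s(L_i(x)) = R_i(0, x), each α_i ∈ [0, κ a_i] with κ < 1, and for each i the map α ↦ R_i(α, x) is differentiable with |∂R_i/∂α(τ, x)| ≤ Z₀ for all x and all τ between 0 and α_i. Then ‖S − s‖_∞ ≤ |α|_∞ (‖s‖_∞ + Z₀)/(1 − |α|_∞), where |α|_∞ = max_i α_i. -/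
/-!
Subtracting the two self-referential equations, the error `S - s` satisfies
`(S - s)(L_i t) = α_i (S - s)(t) + α_i s(t) + (R_i(α_i, t) - R_i(0, t))`, and by the mean value
theorem the last term is at most `Z₀ α_i`. Since the `L_i` cover `[x₁, x_N]`, evaluating at a point
where `|S - s|` attains its maximum `M` gives `M ≤ |α|_∞ (M + ‖s‖_∞ + Z₀)`, which solves to the bound.
-/

open Set

theorem abs_sub_le_mul_of_hasDerivAt_of_abs_le {f f' : ℝ → ℝ} {a b C : ℝ} (hab : a ≤ b)
    (hf : ∀ τ ∈ Icc a b, HasDerivAt f (f' τ) τ) (hC : ∀ τ ∈ Icc a b, |f' τ| ≤ C) :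
    |f b - f a| ≤ C * (b - a) :=
  norm_image_sub_le_of_norm_deriv_le_segment' (fun τ hτ => (hf τ hτ).hasDerivWithinAt)
    (fun τ hτ => hC τ (Ico_subset_Icc_self hτ)) b (right_mem_Icc.2 hab)

theorem IsCompact.abs_le_div_one_sub_of_forall_abs_le {X : Type*} [TopologicalSpace X] {K : Set X}
    (hK : IsCompact K) {f : X → ℝ} (hf : ContinuousOn f K) {A B : ℝ} (hA : A < 1)
    (h : ∀ M, (∀ t ∈ K, |f t| ≤ M) → ∀ u ∈ K, |f u| ≤ A * M + B) :
    ∀ u ∈ K, |f u| ≤ B / (1 - A) := by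
  intro u hu
  obtain ⟨u₀, hu₀, hmax⟩ := hK.exists_isMaxOn ⟨u, hu⟩ hf.abs
  have hself : |f u₀| ≤ A * |f u₀| + B := h _ (fun t ht => hmax ht) u₀ hu₀
  calc |f u| ≤ |f u₀| := hmax hu
    _ ≤ B / (1 - A) := by rw [le_div_iff₀ (by linarith)]; linarith

theorem stmt_6_general
    (N : ℕ)
    (x : ℕ → ℝ)
    (a : ℕ → ℝ)
    (L : ℕ → ℝ → ℝ)
    (hcover : ∀ u ∈ Set.Icc (x 1) (x N),
      ∃ i t, 1 ≤ i ∧ i < N ∧ t ∈ Set.Icc (x 1) (x N) ∧ u = L i t)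
    (α : ℕ → ℝ) (κ : ℝ)
    (hα : ∀ i, 1 ≤ i → i < N → α i ∈ Set.Icc 0 (κ * a i))
    (R : ℕ → ℝ → ℝ → ℝ) (R' : ℕ → ℝ → ℝ → ℝ) (Z₀ : ℝ)
    (hdiff : ∀ i, 1 ≤ i → i < N → ∀ t ∈ Set.Icc (x 1) (x N),
      ∀ τ ∈ Set.Icc 0 (α i),
        HasDerivAt (fun β => R i β t) (R' i τ t) τ ∧ |R' i τ t| ≤ Z₀)
    (S s : ℝ → ℝ)
    (hScont : ContinuousOn S (Set.Icc (x 1) (x N)))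
    (hscont : ContinuousOn s (Set.Icc (x 1) (x N)))
    (hSeq : ∀ i, 1 ≤ i → i < N → ∀ t ∈ Set.Icc (x 1) (x N),
      S (L i t) = α i * S t + R i (α i) t)
    (hseq : ∀ i, 1 ≤ i → i < N → ∀ t ∈ Set.Icc (x 1) (x N),
      s (L i t) = R i 0 t)
    (A Ms : ℝ) (hA1 : A < 1)
    (hAmax : ∀ i, 1 ≤ i → i < N → α i ≤ A)
    (hMs : ∀ t ∈ Set.Icc (x 1) (x N), |s t| ≤ Ms) :
    ∀ u ∈ Set.Icc (x 1) (x N), |S u - s u| ≤ A * (Ms + Z₀) / (1 - A) := by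
  refine isCompact_Icc.abs_le_div_one_sub_of_forall_abs_le (hScont.sub hscont) hA1 ?_
  intro M hM u hu
  obtain ⟨i, t, hi1, hiN, ht, rfl⟩ := hcover u hu
  have hα0 : 0 ≤ α i := (hα i hi1 hiN).1
  have hderiv := hdiff i hi1 hiN t ht
  have hZ₀ : 0 ≤ Z₀ := (abs_nonneg _).trans (hderiv 0 ⟨le_rfl, hα0⟩).2
  have hR : |R i (α i) t - R i 0 t| ≤ Z₀ * α i := by
    simpa only [sub_zero] using abs_sub_le_mul_of_hasDerivAt_of_abs_le hα0
      (fun τ hτ => (hderiv τ hτ).1) (fun τ hτ => (hderiv τ hτ).2)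
  have hMt : |S t - s t| ≤ M := hM t ht
  have hst : |s t| ≤ Ms := hMs t ht
  calc |S (L i t) - s (L i t)|
      = |α i * (S t - s t) + α i * s t + (R i (α i) t - R i 0 t)| := by
        rw [hSeq i hi1 hiN t ht, hseq i hi1 hiN t ht]; ring_nf
    _ ≤ α i * M + α i * Ms + Z₀ * α i := by
        refine (abs_add_three _ _ _).trans (add_le_add (add_le_add ?_ ?_) hR) <;>
          rw [abs_mul, abs_of_nonneg hα0] <;> gcongr
    _ = α i * (M + Ms + Z₀) := by ring
    _ ≤ A * (M + Ms + Z₀) := mul_le_mul_of_nonneg_right (hAmax i hi1 hiN)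
        (by linarith [abs_nonneg (S t - s t), abs_nonneg (s t)])
    _ = A * M + A * (Ms + Z₀) := by ring

theorem stmt_6
    (N : ℕ) (hN : 2 ≤ N)
    (x : ℕ → ℝ)
    (hmono : ∀ i, 1 ≤ i → i < N → x i < x (i + 1))
    (a : ℕ → ℝ) (ha : ∀ i, 1 ≤ i → i < N → a i = (x (i + 1) - x i) / (x N - x 1))
    (L : ℕ → ℝ → ℝ)
    (hL : ∀ i, 1 ≤ i → i < N → ∀ t : ℝ, L i t = a i * t + (x i - a i * x 1))
    (hcover : ∀ u ∈ Set.Icc (x 1) (x N),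
      ∃ i t, 1 ≤ i ∧ i < N ∧ t ∈ Set.Icc (x 1) (x N) ∧ u = L i t)
    (α : ℕ → ℝ) (κ : ℝ) (hκ1 : κ < 1)
    (hα : ∀ i, 1 ≤ i → i < N → α i ∈ Set.Icc 0 (κ * a i))
    (R : ℕ → ℝ → ℝ → ℝ) (R' : ℕ → ℝ → ℝ → ℝ) (Z₀ : ℝ)
    (hdiff : ∀ i, 1 ≤ i → i < N → ∀ t ∈ Set.Icc (x 1) (x N),
      ∀ τ ∈ Set.Icc 0 (α i),
        HasDerivAt (fun β => R i β t) (R' i τ t) τ ∧ |R' i τ t| ≤ Z₀)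
    (S s : ℝ → ℝ)
    (hScont : ContinuousOn S (Set.Icc (x 1) (x N)))
    (hscont : ContinuousOn s (Set.Icc (x 1) (x N)))
    (hSeq : ∀ i, 1 ≤ i → i < N → ∀ t ∈ Set.Icc (x 1) (x N),
      S (L i t) = α i * S t + R i (α i) t)
    (hseq : ∀ i, 1 ≤ i → i < N → ∀ t ∈ Set.Icc (x 1) (x N),
      s (L i t) = R i 0 t)
    (A Ms : ℝ) (hA0 : 0 ≤ A) (hA1 : A < 1)
    (hAmax : ∀ i, 1 ≤ i → i < N → α i ≤ A)
    (hMs : ∀ t ∈ Set.Icc (x 1) (x N), |s t| ≤ Ms) :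
    ∀ u ∈ Set.Icc (x 1) (x N), |S u - s u| ≤ A * (Ms + Z₀) / (1 - A) :=
  stmt_6_general N x a L hcover α κ hα R R' Z₀ hdiff S s hScont hscont hSeq hseq A Ms hA1 hAmax hMs
end

section
/- Let f ∈ C¹[x₁,x_N] with f(x_i) = y_i, and let s be the classical rational cubic spline defined piecewise on [x_i, x_{i+1}] by s(x) = [y_i(1−φ)³ + (r_i y_i + h_i d_i)φ(1−φ)² + (r_i y_{i+1} − h_i d_{i+1})φ²(1−φ) + y_{i+1}φ³]/[1+(r_i−3)φ(1−φ)], φ = (x−x_i)/h_i, with r_i > −1. Then ‖f − s‖_∞ ≤ (1/(4c)) h |d|_∞ + (1/(4c)) ω(f; h)(|r|_∞ + 4), where h = max h_i, c = min c_i with c_i as in the denominator lower bound, |d|_∞ = max |d_i|, |r|_∞ = max |r_i|, and ω(f; h) is the modulus of continuity of f. -/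
/-- Modulus of continuity of `f` on `[a, b]` at scale `h`. -/
noncomputable def modulusOfContinuity (f : ℝ → ℝ) (a b h : ℝ) : ℝ :=
  sSup {d : ℝ | ∃ u ∈ Set.Icc a b, ∃ v ∈ Set.Icc a b, |u - v| ≤ h ∧ d = |f u - f v|}

/-!
On `[xᵢ, xᵢ₊₁]` put `t = (u - xᵢ) / hᵢ`. The denominator equals
`(1-t)³ + rᵢ t(1-t)² + rᵢ t²(1-t) + t³`, so `f(u) - s(u)` is a cubic in Bernstein form over the
same denominator. Its end coefficients `f(u) - yᵢ`, `f(u) - yᵢ₊₁` are bounded by `ω(f; h)` and its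
middle ones by `|r| ω(f; h) + h |d|`; since the Bernstein weights sum to one and `t(1-t) ≤ 1/4`,
the numerator is at most `ω + (|r| ω + h |d|) / 4`, while the denominator is at least `c`.
-/

open Set

lemma abs_sub_le_modulusOfContinuity {f : ℝ → ℝ} {a b h u v : ℝ} (hf : ContinuousOn f (Icc a b))
    (hu : u ∈ Icc a b) (hv : v ∈ Icc a b) (huv : |u - v| ≤ h) :
    |f u - f v| ≤ modulusOfContinuity f a b h := by
  obtain ⟨M, hM⟩ := isCompact_Icc.exists_bound_of_continuousOn hf
  refine le_csSup ⟨M + M, ?_⟩ ⟨u, hu, v, hv, huv, rfl⟩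
  rintro _ ⟨u', hu', v', hv', -, rfl⟩
  exact (abs_sub _ _).trans (add_le_add (hM u' hu') (hM v' hv'))

lemma exists_mem_Icc_succ {α : Type*} [LinearOrder α] {x : ℕ → α} {N : ℕ} (hN : 2 ≤ N) {u : α}
    (hu : u ∈ Icc (x 1) (x N)) : ∃ i, 1 ≤ i ∧ i < N ∧ u ∈ Icc (x i) (x (i + 1)) := by
  induction N, hN using Nat.le_induction with
  | base => exact ⟨1, le_rfl, by norm_num, hu⟩
  | succ n _ ih =>
    rcases le_or_gt u (x n) with hun | hnu
    · obtain ⟨i, hi1, hin, hi⟩ := ih ⟨hu.1, hun⟩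
      exact ⟨i, hi1, hin.trans n.lt_succ_self, hi⟩
    · exact ⟨n, by omega, n.lt_succ_self, hnu.le, hu.2⟩

lemma abs_bernstein_cubic_le {t a b p q w m : ℝ} (ht0 : 0 ≤ t) (ht1 : t ≤ 1)
    (ha : |a| ≤ w) (hb : |b| ≤ w) (hp : |p| ≤ m) (hq : |q| ≤ m) :
    |a * (1 - t) ^ 3 + p * (t * (1 - t) ^ 2) + q * (t ^ 2 * (1 - t)) + b * t ^ 3|
      ≤ w + m / 4 := by
  have hmul : ∀ {c e k : ℝ}, |c| ≤ k → 0 ≤ e → |c * e| ≤ k * e := fun hc he => by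
    rw [abs_mul, abs_of_nonneg he]
    exact mul_le_mul_of_nonneg_right hc he
  have h1t : 0 ≤ 1 - t := by linarith
  have hw : 0 ≤ w := (abs_nonneg a).trans ha
  have hm : 0 ≤ m := (abs_nonneg p).trans hp
  calc _ ≤ |a * (1 - t) ^ 3| + |p * (t * (1 - t) ^ 2)| + |q * (t ^ 2 * (1 - t))| + |b * t ^ 3| :=
        (abs_add_le _ _).trans (add_le_add_left ((abs_add_le _ _).trans
          (add_le_add_left (abs_add_le _ _) _)) _)
    _ ≤ w * (1 - t) ^ 3 + m * (t * (1 - t) ^ 2) + m * (t ^ 2 * (1 - t)) + w * t ^ 3 := by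
        gcongr ?_ + ?_ + ?_ + ?_ <;> apply hmul <;> first | assumption | positivity
    _ = w * (1 - 3 * (t * (1 - t))) + m * (t * (1 - t)) := by ring
    _ ≤ w + m / 4 := by
        nlinarith [mul_nonneg hw (mul_nonneg ht0 h1t), mul_nonneg hm (sq_nonneg (2 * t - 1))]

noncomputable section

def rationalCubicDenom (r t : ℝ) : ℝ := 1 + (r - 3) * t * (1 - t)

/-- The spline on `[xᵢ, xᵢ₊₁]` as a function of `t = (u - xᵢ) / hᵢ`, with `h = hᵢ`. -/
def rationalCubic (y₀ y₁ d₀ d₁ r h t : ℝ) : ℝ :=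
  (y₀ * (1 - t) ^ 3 + (r * y₀ + h * d₀) * t * (1 - t) ^ 2
    + (r * y₁ - h * d₁) * t ^ 2 * (1 - t) + y₁ * t ^ 3) / rationalCubicDenom r t

end

lemma le_rationalCubicDenom {r t c : ℝ} (ht0 : 0 ≤ t) (ht1 : t ≤ 1)
    (hc : c ≤ if r < 3 then (1 + r) / 4 else 1) : c ≤ rationalCubicDenom r t := by
  have htt : 0 ≤ t * (1 - t) := mul_nonneg ht0 (by linarith)
  unfold rationalCubicDenom
  split_ifs at hc
  · nlinarith [sq_nonneg (2 * t - 1)]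
  · nlinarith

lemma sub_rationalCubic_eq {y₀ y₁ d₀ d₁ r h t : ℝ} (z : ℝ) (hD : rationalCubicDenom r t ≠ 0) :
    z - rationalCubic y₀ y₁ d₀ d₁ r h t =
      ((z - y₀) * (1 - t) ^ 3 + (r * (z - y₀) - h * d₀) * (t * (1 - t) ^ 2)
        + (r * (z - y₁) + h * d₁) * (t ^ 2 * (1 - t)) + (z - y₁) * t ^ 3)
        / rationalCubicDenom r t := by
  rw [rationalCubic, eq_div_iff hD, sub_mul, div_mul_cancel₀ _ hD, rationalCubicDenom]
  ring

lemma abs_sub_rationalCubic_le {y₀ y₁ d₀ d₁ r h t z c w δ ρ H : ℝ} (ht0 : 0 ≤ t) (ht1 : t ≤ 1)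
    (hc0 : 0 < c) (hc : c ≤ if r < 3 then (1 + r) / 4 else 1)
    (hz₀ : |z - y₀| ≤ w) (hz₁ : |z - y₁| ≤ w) (hd₀ : |d₀| ≤ δ) (hd₁ : |d₁| ≤ δ) (hr : |r| ≤ ρ)
    (hh0 : 0 ≤ h) (hhH : h ≤ H) :
    |z - rationalCubic y₀ y₁ d₀ d₁ r h t| ≤ 1 / (4 * c) * H * δ + 1 / (4 * c) * w * (ρ + 4) := by
  have hD := le_rationalCubicDenom ht0 ht1 hc
  have hcoef : ∀ {e g : ℝ}, |e| ≤ w → |g| ≤ δ → |r * e - h * g| ≤ ρ * w + H * δ :=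
    fun he hg => (abs_sub _ _).trans <| by
      rw [abs_mul, abs_mul, abs_of_nonneg hh0]
      exact add_le_add (mul_le_mul hr he (abs_nonneg _) ((abs_nonneg _).trans hr))
        (mul_le_mul hhH hg (abs_nonneg _) (hh0.trans hhH))
  have hE := abs_bernstein_cubic_le (q := r * (z - y₁) + h * d₁) ht0 ht1 hz₀ hz₁ (hcoef hz₀ hd₀)
    (by simpa using hcoef hz₁ (g := -d₁) (by rwa [abs_neg]))
  rw [sub_rationalCubic_eq z (hc0.trans_le hD).ne', abs_div, abs_of_pos (hc0.trans_le hD)]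
  calc _ ≤ (w + (ρ * w + H * δ) / 4) / c := div_le_div₀ ((abs_nonneg _).trans hE) hE hc0 hD
    _ = 1 / (4 * c) * H * δ + 1 / (4 * c) * w * (ρ + 4) := by field_simp; ring

theorem stmt_7_general
    (N : ℕ) (hN : 2 ≤ N)
    (x : ℕ → ℝ)
    (hmono : ∀ i, 1 ≤ i → i < N → x i < x (i + 1))
    (f : ℝ → ℝ) (hf : ContDiffOn ℝ 1 f (Set.Icc (x 1) (x N)))
    (y d r : ℕ → ℝ)
    (hy : ∀ i, 1 ≤ i → i ≤ N → y i = f (x i))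
    (s : ℝ → ℝ)
    (hs : ∀ i, 1 ≤ i → i < N → ∀ u ∈ Set.Icc (x i) (x (i + 1)),
      s u = (y i * (1 - (u - x i) / (x (i + 1) - x i))^3
          + (r i * y i + (x (i + 1) - x i) * d i) *
              ((u - x i) / (x (i + 1) - x i)) * (1 - (u - x i) / (x (i + 1) - x i))^2
          + (r i * y (i + 1) - (x (i + 1) - x i) * d (i + 1)) *
              ((u - x i) / (x (i + 1) - x i))^2 * (1 - (u - x i) / (x (i + 1) - x i))
          + y (i + 1) * ((u - x i) / (x (i + 1) - x i))^3) /
          (1 + (r i - 3) * ((u - x i) / (x (i + 1) - x i)) *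
            (1 - (u - x i) / (x (i + 1) - x i))))
    (h c dmax rmax : ℝ) (hc0 : 0 < c)
    (hc : ∀ i, 1 ≤ i → i < N → c ≤ (if r i < 3 then (1 + r i) / 4 else 1))
    (hh : ∀ i, 1 ≤ i → i < N → x (i + 1) - x i ≤ h)
    (hd : ∀ i, 1 ≤ i → i ≤ N → |d i| ≤ dmax)
    (hrmax : ∀ i, 1 ≤ i → i < N → |r i| ≤ rmax) :
    ∀ u ∈ Set.Icc (x 1) (x N),
      |f u - s u| ≤ (1 / (4 * c)) * h * dmax
        + (1 / (4 * c)) * modulusOfContinuity f (x 1) (x N) h * (rmax + 4) := by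
  intro u hu
  obtain ⟨i, hi1, hiN, hui⟩ := exists_mem_Icc_succ hN hu
  have hx : MonotoneOn x (Icc 1 N) := monotoneOn_of_le_succ ordConnected_Icc
    fun j _ hj hj' => by
      rw [Nat.succ_eq_succ] at hj' ⊢
      exact (hmono j hj.1 hj'.2).le
  have hxi : x i ∈ Icc (x 1) (x N) := hx.mapsTo_Icc ⟨hi1, hiN.le⟩
  have hxi' : x (i + 1) ∈ Icc (x 1) (x N) := hx.mapsTo_Icc ⟨by omega, hiN⟩
  have hstep : 0 < x (i + 1) - x i := sub_pos.2 (hmono i hi1 hiN)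
  have hω : ∀ v ∈ Icc (x 1) (x N), |u - v| ≤ h →
      |f u - f v| ≤ modulusOfContinuity f (x 1) (x N) h :=
    fun _ hv => abs_sub_le_modulusOfContinuity hf.continuousOn hu hv
  have hsu : s u = rationalCubic (y i) (y (i + 1)) (d i) (d (i + 1)) (r i) (x (i + 1) - x i)
      ((u - x i) / (x (i + 1) - x i)) := hs i hi1 hiN u hui
  obtain ⟨hxu, hux⟩ := hui
  have hhi := hh i hi1 hiN
  rw [hsu]
  refine abs_sub_rationalCubic_le (div_nonneg (by linarith) hstep.le)
    ((div_le_one hstep).2 (by linarith)) hc0 (hc i hi1 hiN) ?_ ?_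
    (hd i hi1 hiN.le) (hd (i + 1) (by omega) hiN) (hrmax i hi1 hiN) hstep.le hhi
  · rw [hy i hi1 hiN.le]
    exact hω _ hxi (abs_le.2 ⟨by linarith, by linarith⟩)
  · rw [hy (i + 1) (by omega) hiN]
    exact hω _ hxi' (abs_le.2 ⟨by linarith, by linarith⟩)

theorem stmt_7
    (N : ℕ) (hN : 2 ≤ N)
    (x : ℕ → ℝ)
    (hmono : ∀ i, 1 ≤ i → i < N → x i < x (i + 1))
    (f : ℝ → ℝ) (hf : ContDiffOn ℝ 1 f (Set.Icc (x 1) (x N)))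
    (y d r : ℕ → ℝ)
    (hy : ∀ i, 1 ≤ i → i ≤ N → y i = f (x i))
    (hr : ∀ i, 1 ≤ i → i < N → r i > -1)
    (s : ℝ → ℝ)
    (hs : ∀ i, 1 ≤ i → i < N → ∀ u ∈ Set.Icc (x i) (x (i + 1)),
      s u = (y i * (1 - (u - x i) / (x (i + 1) - x i))^3
          + (r i * y i + (x (i + 1) - x i) * d i) *
              ((u - x i) / (x (i + 1) - x i)) * (1 - (u - x i) / (x (i + 1) - x i))^2
          + (r i * y (i + 1) - (x (i + 1) - x i) * d (i + 1)) *
              ((u - x i) / (x (i + 1) - x i))^2 * (1 - (u - x i) / (x (i + 1) - x i))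
          + y (i + 1) * ((u - x i) / (x (i + 1) - x i))^3) /
          (1 + (r i - 3) * ((u - x i) / (x (i + 1) - x i)) *
            (1 - (u - x i) / (x (i + 1) - x i))))
    (h c dmax rmax : ℝ) (hc0 : 0 < c)
    (hc : ∀ i, 1 ≤ i → i < N → c ≤ (if r i < 3 then (1 + r i) / 4 else 1))
    (hh : ∀ i, 1 ≤ i → i < N → x (i + 1) - x i ≤ h)
    (hd : ∀ i, 1 ≤ i → i ≤ N → |d i| ≤ dmax)
    (hrmax : ∀ i, 1 ≤ i → i < N → |r i| ≤ rmax) :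
    ∀ u ∈ Set.Icc (x 1) (x N),
      |f u - s u| ≤ (1 / (4 * c)) * h * dmax
        + (1 / (4 * c)) * modulusOfContinuity f (x 1) (x N) h * (rmax + 4) :=
  stmt_7_general N hN x hmono f hf y d r hy s hs h c dmax rmax hc0 hc hh hd hrmax
end

section
/- Let f : [a,b] → ℝ be continuous. If for every x ∈ (a,b) at least one of the one-sided derivatives f′(x⁺) or f′(x⁻) exists (possibly +∞) and is nonnegative, then f is monotone increasing on [a,b]. -/
/-!
Perturb `f` to `g = f + ε · id`: at every interior point `g` either strictly increases just to the
right or strictly decreases just to the left. If `g y < c < g x` for some `x < y`, the first point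
`z` at which `g` drops below `c` has `g z = c` and `g ≥ c` on `[x, z]`, with values below `c`
arbitrarily close to the right of `z`; this rules out both alternatives. Hence every `g` is
monotone, and letting `ε → 0` so is `f`.
-/

open Set Filter Topology

theorem exists_first_drop_below {g : ℝ → ℝ} {x y c : ℝ} (hxy : x ≤ y)
    (hg : ContinuousOn g (Icc x y)) (hyc : g y < c) (hcx : c < g x) :
    ∃ z ∈ Ioo x y, g z = c ∧ (∀ t ∈ Ico x z, c ≤ g t) ∧ ∃ᶠ t in 𝓝[>] z, g t < c := by
  set S := {t ∈ Icc x y | g t < c}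
  set z := sInf S
  have hyS : y ∈ S := ⟨⟨hxy, le_rfl⟩, hyc⟩
  have hSbdd : BddBelow S := ⟨x, fun t ht => ht.1.1⟩
  have hzS : ∃ᶠ t in 𝓝 z, t ∈ S :=
    mem_closure_iff_frequently.1 (csInf_mem_closure ⟨y, hyS⟩ hSbdd)
  have hxz : x ≤ z := le_csInf ⟨y, hyS⟩ fun t ht => ht.1.1
  have hzy : z ≤ y := csInf_le hSbdd hyS
  have hgz_le : g z ≤ c := by
    have hclosed : IsClosed {t ∈ Icc x y | g t ≤ c} :=
      hg.preimage_isClosed_of_isClosed isClosed_Icc isClosed_Iic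
    exact (hclosed.mem_of_frequently_of_tendsto (hzS.mono fun t ht => ⟨ht.1, ht.2.le⟩)
      tendsto_id).2
  have hxz : x < z := hxz.lt_of_ne fun hxz => by rw [← hxz] at hgz_le; linarith
  have hge : ∀ t ∈ Ico x z, c ≤ g t := fun t ht =>
    not_lt.1 fun hlt => notMem_of_lt_csInf ht.2 hSbdd ⟨⟨ht.1, ht.2.le.trans hzy⟩, hlt⟩
  have hgz : g z = c := by
    have hclosed : IsClosed {t ∈ Icc x y | c ≤ g t} :=
      hg.preimage_isClosed_of_isClosed isClosed_Icc isClosed_Ici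
    have hIcc : Icc x z ⊆ {t ∈ Icc x y | c ≤ g t} := by
      rw [← closure_Ico hxz.ne]
      exact closure_minimal (fun t ht => ⟨⟨ht.1, ht.2.le.trans hzy⟩, hge t ht⟩) hclosed
    exact le_antisymm hgz_le (hIcc ⟨hxz.le, le_rfl⟩).2
  have hzy : z < y := hzy.lt_of_ne fun hzy => by rw [hzy] at hgz; linarith
  refine ⟨z, ⟨hxz, hzy⟩, hgz, hge, frequently_nhdsWithin_iff.2 (hzS.mono fun t ht => ?_)⟩
  have hzt : z ≤ t := csInf_le hSbdd ht
  exact ⟨ht.2, hzt.lt_of_ne fun hzt => by rw [← hzt] at ht; linarith [ht.2]⟩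

theorem le_of_forall_eventually_lt_right_or_left {g : ℝ → ℝ} {x y : ℝ} (hxy : x ≤ y)
    (hg : ContinuousOn g (Icc x y))
    (h : ∀ z ∈ Ioo x y, (∀ᶠ t in 𝓝[>] z, g z < g t) ∨ ∀ᶠ t in 𝓝[<] z, g t < g z) :
    g x ≤ g y := by
  by_contra! hyx
  obtain ⟨c, hyc, hcx⟩ := exists_between hyx
  obtain ⟨z, hz, hgz, hge, hdrop⟩ := exists_first_drop_below hxy hg hyc hcx
  rcases h z hz with hright | hleft
  · obtain ⟨t, hzt, htc⟩ := (hright.and_frequently hdrop).exists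
    linarith
  · obtain ⟨t, htz, ht⟩ := (hleft.and (Ioo_mem_nhdsLT hz.1)).exists
    linarith [hge t ⟨ht.1.le, ht.2⟩]

theorem monotoneOn_of_forall_eventually_lt_right_or_left {g : ℝ → ℝ} {a b : ℝ}
    (hg : ContinuousOn g (Icc a b))
    (h : ∀ z ∈ Ioo a b, (∀ᶠ t in 𝓝[>] z, g z < g t) ∨ ∀ᶠ t in 𝓝[<] z, g t < g z) :
    MonotoneOn g (Icc a b) := fun _ hx _ hy hxy =>
  le_of_forall_eventually_lt_right_or_left hxy (hg.mono (Icc_subset_Icc hx.1 hy.2))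
    fun z hz => h z ⟨hx.1.trans_lt hz.1, hz.2.trans_le hy.2⟩

theorem monotoneOn_of_forall_pos_monotoneOn_add_mul {f : ℝ → ℝ} {s : Set ℝ}
    (h : ∀ ε > 0, MonotoneOn (fun t => f t + ε * t) s) : MonotoneOn f s := by
  intro x hx y hy hxy
  have hlim : Tendsto (fun ε : ℝ => f y + ε * (y - x)) (𝓝[>] 0) (𝓝 (f y)) := by
    have := ((tendsto_id (x := 𝓝 (0 : ℝ))).mul_const (y - x)).const_add (f y)
    simpa using this.mono_left nhdsWithin_le_nhds
  refine ge_of_tendsto hlim (eventually_nhdsWithin_of_forall fun ε hε => ?_)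
  linarith [h ε hε hx hy hxy]

theorem eventually_lt_slope_of_tendsto {f : ℝ → ℝ} {z m : ℝ} {L : Filter ℝ} {l : EReal}
    (hm : (m : EReal) < l)
    (h : Tendsto (fun t : ℝ => ((f t - f z) / (t - z) : EReal)) L (𝓝 l)) :
    ∀ᶠ t in L, m < (f t - f z) / (t - z) :=
  (h.eventually (eventually_gt_nhds hm)).mono fun t ht => by
    rw [← EReal.coe_sub, ← EReal.coe_sub, ← EReal.coe_div] at ht
    exact EReal.coe_lt_coe_iff.1 ht

theorem eventually_add_mul_lt_of_tendsto_slope_right {f : ℝ → ℝ} {z ε : ℝ} {l : EReal}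
    (hl : ((-ε : ℝ) : EReal) < l)
    (h : Tendsto (fun t : ℝ => ((f t - f z) / (t - z) : EReal)) (𝓝[>] z) (𝓝 l)) :
    ∀ᶠ t in 𝓝[>] z, f z + ε * z < f t + ε * t := by
  filter_upwards [eventually_lt_slope_of_tendsto hl h, self_mem_nhdsWithin] with t hslope hzt
  rw [lt_div_iff₀ (sub_pos.2 hzt)] at hslope
  linarith

theorem eventually_add_mul_lt_of_tendsto_slope_left {f : ℝ → ℝ} {z ε : ℝ} {l : EReal}
    (hl : ((-ε : ℝ) : EReal) < l)
    (h : Tendsto (fun t : ℝ => ((f t - f z) / (t - z) : EReal)) (𝓝[<] z) (𝓝 l)) :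
    ∀ᶠ t in 𝓝[<] z, f t + ε * t < f z + ε * z := by
  filter_upwards [eventually_lt_slope_of_tendsto hl h, self_mem_nhdsWithin] with t hslope htz
  rw [lt_div_iff_of_neg (sub_neg.2 htz)] at hslope
  linarith

theorem stmt_9_general (a b : ℝ) (f : ℝ → ℝ)
    (hf : ContinuousOn f (Set.Icc a b))
    (hder : ∀ x ∈ Set.Ioo a b,
      (∃ l : EReal, 0 ≤ l ∧
        Filter.Tendsto (fun t : ℝ => ((f t - f x) / (t - x) : EReal))
          (nhdsWithin x (Set.Ioi x)) (nhds l)) ∨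
      (∃ l : EReal, 0 ≤ l ∧
        Filter.Tendsto (fun t : ℝ => ((f t - f x) / (t - x) : EReal))
          (nhdsWithin x (Set.Iio x)) (nhds l))) :
    MonotoneOn f (Set.Icc a b) := by
  refine monotoneOn_of_forall_pos_monotoneOn_add_mul fun ε hε => ?_
  refine monotoneOn_of_forall_eventually_lt_right_or_left
    (hf.add (continuousOn_const.mul continuousOn_id)) fun z hz => ?_
  have hneg : ((-ε : ℝ) : EReal) < 0 := EReal.coe_neg'.2 (neg_neg_of_pos hε)
  rcases hder z hz with ⟨l, hl, hlim⟩ | ⟨l, hl, hlim⟩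
  · exact .inl (eventually_add_mul_lt_of_tendsto_slope_right (hneg.trans_le hl) hlim)
  · exact .inr (eventually_add_mul_lt_of_tendsto_slope_left (hneg.trans_le hl) hlim)

theorem stmt_9 (a b : ℝ) (hab : a < b) (f : ℝ → ℝ)
    (hf : ContinuousOn f (Set.Icc a b))
    (hder : ∀ x ∈ Set.Ioo a b,
      (∃ l : EReal, 0 ≤ l ∧
        Filter.Tendsto (fun t : ℝ => ((f t - f x) / (t - x) : EReal))
          (nhdsWithin x (Set.Ioi x)) (nhds l)) ∨
      (∃ l : EReal, 0 ≤ l ∧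
        Filter.Tendsto (fun t : ℝ => ((f t - f x) / (t - x) : EReal))
          (nhdsWithin x (Set.Iio x)) (nhds l))) :
    MonotoneOn f (Set.Icc a b) :=
  stmt_9_general a b f hf hder
end

section
/- Assume Δ ≥ 0, d_i ≥ 0, d_{i+1} ≥ 0, d₁ ≥ 0, d_N ≥ 0, h > 0, x_N > x₁, and 0 ≤ α ≤ min{ d_i h/(d₁(x_N−x₁)), d_{i+1} h/(d_N(x_N−x₁)), Δh/(y_N−y₁) } (with each term ignored when its denominator is zero), where y_N > y₁. If r satisfies r[hΔ − α(y_N−y₁)] ≥ h(d_i + d_{i+1}) − α(x_N−x₁)(d₁+d_N), then all five quantities T = d_{i+1} − (α/h)(x_N−x₁)d_N, W = d_i − (α/h)(x_N−x₁)d₁, S = 2(rΔ − d_i) − (2α/h)[r(y_N−y₁) − d₁(x_N−x₁)], V = 2(rΔ − d_{i+1}) − (2α/h)[r(y_N−y₁) − d_N(x_N−x₁)], and U = (r²+3)Δ − r(d_i+d_{i+1}) − (α/h)[(r²+3)(y_N−y₁) − r(x_N−x₁)(d₁+d_N)] are nonnegative. -/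
/-! Writing `a = α / h`, `p = Δ - a (y_N - y₁)`, `w = W` and `t = T`, the hypotheses on `α`
say exactly `p, w, t ≥ 0`, and the one on `r` says `w + t ≤ r p`. In these variables
`S = 2 (r p - w)`, `V = 2 (r p - t)` and `U = (r² + 3) p - r (w + t)`, whose nonnegativity
follows from `r p ≥ w + t ≥ 0`, splitting on the sign of `r` for `U`. -/

theorem quartic_coeffs_nonneg {p w t r : ℝ} (hp : 0 ≤ p) (hw : 0 ≤ w) (ht : 0 ≤ t)
    (hr : w + t ≤ r * p) :
    0 ≤ 2 * (r * p - w) ∧ 0 ≤ 2 * (r * p - t) ∧ 0 ≤ (r ^ 2 + 3) * p - r * (w + t) := by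
  refine ⟨by linarith, by linarith, ?_⟩
  rcases le_or_gt 0 r with hr0 | hr0
  · nlinarith [mul_le_mul_of_nonneg_left hr hr0]
  · nlinarith [mul_nonneg (add_nonneg hw ht) (neg_nonneg.2 hr0.le), sq_nonneg r]

theorem stmt_14_general
    (Δ di di1 d₁ dN h x₁ xN y₁ yN α r : ℝ)
    (hh : 0 < h)
    (hα1 : α * (d₁ * (xN - x₁)) ≤ di * h)
    (hα2 : α * (dN * (xN - x₁)) ≤ di1 * h)
    (hα3 : α * (yN - y₁) ≤ Δ * h)
    (hr : r * (h * Δ - α * (yN - y₁)) ≥ h * (di + di1) - α * (xN - x₁) * (d₁ + dN)) :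
    0 ≤ di1 - (α / h) * (xN - x₁) * dN ∧
    0 ≤ di - (α / h) * (xN - x₁) * d₁ ∧
    0 ≤ 2 * (r * Δ - di) - (2 * α / h) * (r * (yN - y₁) - d₁ * (xN - x₁)) ∧
    0 ≤ 2 * (r * Δ - di1) - (2 * α / h) * (r * (yN - y₁) - dN * (xN - x₁)) ∧
    0 ≤ (r^2 + 3) * Δ - r * (di + di1)
        - (α / h) * ((r^2 + 3) * (yN - y₁) - r * (xN - x₁) * (d₁ + dN)) := by
  obtain ⟨a, rfl⟩ : ∃ a, α = a * h := ⟨α / h, (div_mul_cancel₀ α hh.ne').symm⟩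
  simp only [mul_div_assoc, mul_div_cancel_right₀ a hh.ne']
  have hw : 0 ≤ di - a * (xN - x₁) * d₁ :=
    sub_nonneg.2 (le_of_mul_le_mul_right (by linarith) hh)
  have ht : 0 ≤ di1 - a * (xN - x₁) * dN :=
    sub_nonneg.2 (le_of_mul_le_mul_right (by linarith) hh)
  have hp : 0 ≤ Δ - a * (yN - y₁) :=
    sub_nonneg.2 (le_of_mul_le_mul_right (by linarith) hh)
  have hwt : (di - a * (xN - x₁) * d₁) + (di1 - a * (xN - x₁) * dN) ≤
      r * (Δ - a * (yN - y₁)) :=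
    le_of_mul_le_mul_right (by linarith) hh
  obtain ⟨hS, hV, hU⟩ := quartic_coeffs_nonneg hp hw ht hwt
  refine ⟨ht, hw, ?_, ?_, ?_⟩ <;> linarith

theorem stmt_14
    (Δ di di1 d₁ dN h x₁ xN y₁ yN α r : ℝ)
    (hΔ : 0 ≤ Δ) (hdi : 0 ≤ di) (hdi1 : 0 ≤ di1) (hd₁ : 0 ≤ d₁) (hdN : 0 ≤ dN)
    (hh : 0 < h) (hx : x₁ < xN) (hy : y₁ < yN) (hα0 : 0 ≤ α)
    (hα1 : α * (d₁ * (xN - x₁)) ≤ di * h)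
    (hα2 : α * (dN * (xN - x₁)) ≤ di1 * h)
    (hα3 : α * (yN - y₁) ≤ Δ * h)
    (hr : r * (h * Δ - α * (yN - y₁)) ≥ h * (di + di1) - α * (xN - x₁) * (d₁ + dN)) :
    0 ≤ di1 - (α / h) * (xN - x₁) * dN ∧
    0 ≤ di - (α / h) * (xN - x₁) * d₁ ∧
    0 ≤ 2 * (r * Δ - di) - (2 * α / h) * (r * (yN - y₁) - d₁ * (xN - x₁)) ∧
    0 ≤ 2 * (r * Δ - di1) - (2 * α / h) * (r * (yN - y₁) - dN * (xN - x₁)) ∧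
    0 ≤ (r^2 + 3) * Δ - r * (di + di1)
        - (α / h) * ((r^2 + 3) * (yN - y₁) - r * (xN - x₁) * (d₁ + dN)) :=
  stmt_14_general Δ di di1 d₁ dN h x₁ xN y₁ yN α r hh hα1 hα2 hα3 hr
end

section
/- (Classical monotonicity criterion, zero-scaling case) Let Δ = (y_{i+1}−y_i)/h > 0, d_i ≥ 0, d_{i+1} ≥ 0, and suppose r ≥ (d_i + d_{i+1})/Δ. Then the coefficients T = d_{i+1}, S = 2(rΔ − d_i), U = (r²+3)Δ − r(d_i+d_{i+1}), V = 2(rΔ − d_{i+1}), W = d_i are all nonnegative, and hence the rational function θ ↦ [Tθ⁴+Sθ³(1−θ)+Uθ²(1−θ)²+Vθ(1−θ)³+W(1−θ)⁴]/[1+(r−3)θ(1−θ)]² is nonnegative on [0,1]. -/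
/-! The hypothesis `r ≥ (dᵢ + dᵢ₊₁)/Δ` says `dᵢ + dᵢ₊₁ ≤ rΔ`, which forces `r ≥ 0` and makes
`S`, `V` and `U = r (rΔ - (dᵢ + dᵢ₊₁)) + 3Δ` visibly nonnegative. The numerator is then a sum of
nonnegative multiples of the quartic Bernstein-type monomials `θᵏ(1-θ)⁴⁻ᵏ`, nonnegative on `[0, 1]`,
and the denominator is a square. -/

section BernsteinQuartic

variable {R : Type*} [CommRing R] [LinearOrder R] [IsStrictOrderedRing R]

theorem quartic_bernstein_form_nonneg {T S U V W θ : R} (hT : 0 ≤ T) (hS : 0 ≤ S) (hU : 0 ≤ U)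
    (hV : 0 ≤ V) (hW : 0 ≤ W) (hθ : θ ∈ Set.Icc (0 : R) 1) :
    0 ≤ T * θ ^ 4 + S * θ ^ 3 * (1 - θ) + U * θ ^ 2 * (1 - θ) ^ 2
      + V * θ * (1 - θ) ^ 3 + W * (1 - θ) ^ 4 := by
  have hθ₀ : 0 ≤ θ := hθ.1
  have hθ₁ : 0 ≤ 1 - θ := sub_nonneg.mpr hθ.2
  positivity

end BernsteinQuartic

theorem rationalCubic_middle_coeff_nonneg {Δ di di1 r : ℝ} (hΔ : 0 < Δ) (hr : 0 ≤ r)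
    (h : di + di1 ≤ r * Δ) : 0 ≤ (r ^ 2 + 3) * Δ - r * (di + di1) := by
  have hslack : 0 ≤ r * (r * Δ - (di + di1)) := mul_nonneg hr (sub_nonneg.mpr h)
  calc (0 : ℝ) ≤ r * (r * Δ - (di + di1)) + 3 * Δ := by positivity
    _ = (r ^ 2 + 3) * Δ - r * (di + di1) := by ring

theorem stmt_15_general (Δ di di1 r : ℝ) (hΔ : 0 < Δ) (hdi : 0 ≤ di) (hdi1 : 0 ≤ di1)
    (hr : r ≥ (di + di1) / Δ) :
    (0 ≤ di1 ∧ 0 ≤ 2 * (r * Δ - di) ∧ 0 ≤ (r^2 + 3) * Δ - r * (di + di1) ∧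
     0 ≤ 2 * (r * Δ - di1) ∧ 0 ≤ di) ∧
    ∀ θ ∈ Set.Icc (0:ℝ) 1,
      0 ≤ (di1 * θ^4 + 2 * (r * Δ - di) * θ^3 * (1 - θ)
          + ((r^2 + 3) * Δ - r * (di + di1)) * θ^2 * (1 - θ)^2
          + 2 * (r * Δ - di1) * θ * (1 - θ)^3 + di * (1 - θ)^4) /
          (1 + (r - 3) * θ * (1 - θ))^2 := by
  have hsum : di + di1 ≤ r * Δ := (div_le_iff₀ hΔ).mp hr
  have hr₀ : 0 ≤ r := nonneg_of_mul_nonneg_left (by linarith) hΔ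
  have hS : 0 ≤ 2 * (r * Δ - di) := by linarith
  have hU := rationalCubic_middle_coeff_nonneg hΔ hr₀ hsum
  have hV : 0 ≤ 2 * (r * Δ - di1) := by linarith
  refine ⟨⟨hdi1, hS, hU, hV, hdi⟩, fun θ hθ => ?_⟩
  exact div_nonneg (quartic_bernstein_form_nonneg hdi1 hS hU hV hdi hθ) (sq_nonneg _)

theorem stmt_15 (Δ di di1 r : ℝ) (hΔ : 0 < Δ) (hdi : 0 ≤ di) (hdi1 : 0 ≤ di1)
    (hr1 : r > -1) (hr : r ≥ (di + di1) / Δ) :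
    (0 ≤ di1 ∧ 0 ≤ 2 * (r * Δ - di) ∧ 0 ≤ (r^2 + 3) * Δ - r * (di + di1) ∧
     0 ≤ 2 * (r * Δ - di1) ∧ 0 ≤ di) ∧
    ∀ θ ∈ Set.Icc (0:ℝ) 1,
      0 ≤ (di1 * θ^4 + 2 * (r * Δ - di) * θ^3 * (1 - θ)
          + ((r^2 + 3) * Δ - r * (di + di1)) * θ^2 * (1 - θ)^2
          + 2 * (r * Δ - di1) * θ * (1 - θ)^3 + di * (1 - θ)^4) /
          (1 + (r - 3) * θ * (1 - θ))^2 :=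
  stmt_15_general Δ di di1 r hΔ hdi hdi1 hr
end

section
/- For θ ∈ [0,1] and r > −1, define E(θ, r) = θ(1−θ)[(2θ−1)Δ + (1−θ)d_i − θd_{i+1}]·h / [1+(r−3)θ(1−θ)]. Then |E(θ, r)| ≤ h(|Δ| + max(|d_i|, |d_{i+1}|))/(4 + r − 3) for r ≥ 3, and in particular E(θ, r) → 0 uniformly in θ ∈ [0,1] as r → +∞. (Tension property: as the shape parameter tends to infinity the rational cubic interpolant converges to the linear interpolant on each subinterval.) -/
/-!
Write `t = θ(1 - θ) ∈ [0, 1/4]` and `s = r - 3 ≥ 0`. The bracket is a combination of `Δ`, `dᵢ`,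
`dᵢ₊₁` with coefficients of absolute value at most `1`, `1 - θ`, `θ`, so it is bounded by
`|Δ| + max |dᵢ| |dᵢ₊₁|`; and `t / (1 + s t)` is increasing in `t`, hence at most its value
`1 / (4 + s)` at `t = 1/4`. The bound decays like `1 / r`, which gives uniform convergence.
-/

open Filter Set

lemma abs_hermite_slope_combination_le {θ : ℝ} (hθ : θ ∈ Icc (0 : ℝ) 1) (Δ a b : ℝ) :
    |(2 * θ - 1) * Δ + (1 - θ) * a - θ * b| ≤ |Δ| + max |a| |b| := by
  obtain ⟨h0, h1⟩ := hθ
  have hslope : |2 * θ - 1| ≤ 1 := abs_le.2 ⟨by linarith, by linarith⟩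
  calc |(2 * θ - 1) * Δ + (1 - θ) * a - θ * b|
      ≤ |(2 * θ - 1) * Δ| + |(1 - θ) * a| + |θ * b| :=
        (abs_sub _ _).trans (by gcongr; exact abs_add_le _ _)
    _ = |2 * θ - 1| * |Δ| + (1 - θ) * |a| + θ * |b| := by
        rw [abs_mul, abs_mul, abs_mul, abs_of_nonneg (sub_nonneg.2 h1), abs_of_nonneg h0]
    _ ≤ 1 * |Δ| + (1 - θ) * max |a| |b| + θ * max |a| |b| := by
        gcongr
        · exact le_max_left _ _
        · exact le_max_right _ _
    _ = |Δ| + max |a| |b| := by ring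

lemma div_one_add_mul_le_one_div {s t : ℝ} (hs : 0 ≤ s) (ht₀ : 0 ≤ t) (ht : t ≤ 1 / 4) :
    t / (1 + s * t) ≤ 1 / (4 + s) := by
  rw [div_le_div_iff₀ (by positivity) (by positivity)]
  nlinarith

lemma mul_one_sub_le_one_div_four (θ : ℝ) : θ * (1 - θ) ≤ 1 / 4 := by
  nlinarith [sq_nonneg (θ - 1 / 2)]

lemma tendstoUniformlyOn_zero_of_abs_le {ι α : Type*} {l : Filter ι} {s : Set α}
    {F : ι → α → ℝ} {g : ι → ℝ} (hg : Tendsto g l (nhds 0))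
    (hF : ∀ᶠ i in l, ∀ x ∈ s, |F i x| ≤ g i) : TendstoUniformlyOn F 0 l s := by
  rw [Metric.tendstoUniformlyOn_iff]
  intro ε hε
  filter_upwards [hF, hg.eventually (gt_mem_nhds hε)] with i hi hgi x hx
  simpa [dist_eq_norm] using (hi x hx).trans_lt hgi

lemma abs_rational_cubic_deviation_le {h r θ : ℝ} (hh : 0 < h) (hr : 3 ≤ r)
    (hθ : θ ∈ Icc (0 : ℝ) 1) (Δ a b : ℝ) :
    |θ * (1 - θ) * ((2 * θ - 1) * Δ + (1 - θ) * a - θ * b) * h / (1 + (r - 3) * θ * (1 - θ))|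
      ≤ h * (|Δ| + max |a| |b|) / (4 + r - 3) := by
  have ht₀ : 0 ≤ θ * (1 - θ) := mul_nonneg hθ.1 (sub_nonneg.2 hθ.2)
  have hfrac := div_one_add_mul_le_one_div (sub_nonneg.2 hr) ht₀ (mul_one_sub_le_one_div_four θ)
  have hD : 0 < 1 + (r - 3) * (θ * (1 - θ)) :=
    add_pos_of_pos_of_nonneg one_pos (mul_nonneg (sub_nonneg.2 hr) ht₀)
  have hcomb := abs_hermite_slope_combination_le hθ Δ a b
  calc _ = θ * (1 - θ) / (1 + (r - 3) * (θ * (1 - θ))) *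
            (|(2 * θ - 1) * Δ + (1 - θ) * a - θ * b| * h) := by
        rw [abs_div, abs_mul, abs_mul, abs_of_nonneg ht₀, abs_of_pos hh,
          mul_assoc (r - 3), abs_of_pos hD]
        ring
    _ ≤ 1 / (4 + (r - 3)) * ((|Δ| + max |a| |b|) * h) := by gcongr
    _ = h * (|Δ| + max |a| |b|) / (4 + r - 3) := by ring

theorem stmt_17 (h Δ di di1 : ℝ) (hh : 0 < h)
    (E : ℝ → ℝ → ℝ)
    (hE : ∀ θ r : ℝ, E θ r = θ * (1 - θ) * ((2 * θ - 1) * Δ + (1 - θ) * di - θ * di1) * h /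
      (1 + (r - 3) * θ * (1 - θ))) :
    (∀ r : ℝ, r ≥ 3 → ∀ θ ∈ Set.Icc (0:ℝ) 1,
      |E θ r| ≤ h * (|Δ| + max |di| |di1|) / (4 + r - 3)) ∧
    TendstoUniformlyOn (fun (r : ℝ) (θ : ℝ) => E θ r) 0 Filter.atTop
      (Set.Icc (0:ℝ) 1) := by
  have bound : ∀ r : ℝ, r ≥ 3 → ∀ θ ∈ Set.Icc (0:ℝ) 1,
      |E θ r| ≤ h * (|Δ| + max |di| |di1|) / (4 + r - 3) := fun r hr θ hθ => by
    rw [hE]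
    exact abs_rational_cubic_deviation_le hh hr hθ Δ di di1
  refine ⟨bound, tendstoUniformlyOn_zero_of_abs_le ?_ ((eventually_ge_atTop 3).mono bound)⟩
  exact tendsto_const_nhds.div_atTop
    (tendsto_atTop_add_const_right _ _ (tendsto_atTop_add_const_left _ _ tendsto_id))
end
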